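/- Let i_s and i_e be composable input-enabled transition systems (IOTSs), i_s' ∈ Q_{i_s}, i_e' ∈ Q_{i_e} and σ ∈ (L_{i_s‖i_e}^δ)*. Then i_s ‖ i_e ⟹σ i_s' ‖ i_e' if and only if i_s ⟹(σ↾L_{i_s}^δ) i_s' and i_e ⟹(σ↾L_{i_e}^δ) i_e'. -/

import Mathlib

/-- Visible labels extended with the quiescence label `δ`. -/
inductive DLabel (A : Type) where
  | act : A → DLabel A
  | δ : DLabel A
deriving DecidableEq

/-- A labelled transition system with state type `S` and label type `A`.
`T p none p'` is an internal (τ) transition; `T p (some a) p'` a visible one.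
The set of states is the whole type `S`; the initial state is `q0`. -/
structure LTS (S : Type) (A : Type) where
  T : S → Option A → S → Prop
  I : Set A
  U : Set A
  q0 : S

namespace LTS

variable {S E F A : Type}

/-- The set of visible labels. -/
def L (s : LTS S A) : Set A := s.I ∪ s.U

/-- Well-formedness of an LTS: countably many states and labels, inputs and
outputs disjoint, and visible transitions labelled in `I ∪ U`. -/
def WF (s : LTS S A) : Prop :=
  Countable S ∧ s.I.Countable ∧ s.U.Countable ∧ Disjoint s.I s.U ∧
    ∀ p a q, s.T p (some a) q → a ∈ s.L

/-- A state is quiescent if it has no output transitions and no τ-transitions. -/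
def quiescent (s : LTS S A) (p : S) : Prop :=
  (∀ x ∈ s.U, ∀ p', ¬ s.T p (some x) p') ∧ (∀ p', ¬ s.T p none p')

/-- Single-step transition relation for δ-extended labels: `δ` is a self-loop
on quiescent states. -/
def dstep (s : LTS S A) (p : S) : DLabel A → S → Prop
  | .act a, p' => s.T p (some a) p'
  | .δ, p' => p = p' ∧ s.quiescent p

/-- `eps p p'`: `p'` is reachable from `p` by finitely many τ-transitions. -/
def eps (s : LTS S A) : S → S → Prop :=
  Relation.ReflTransGen (fun p q => s.T p none q)

/-- Weak transition relation `p ⟹σ p'` over δ-extended traces. -/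
def wtrans (s : LTS S A) : S → List (DLabel A) → S → Prop
  | p, [], p' => s.eps p p'
  | p, ℓ :: σ, p'' => ∃ p1 p2, s.eps p p1 ∧ s.dstep p1 ℓ p2 ∧ s.wtrans p2 σ p''

/-- The δ-extended label set `L^δ` as a set of `DLabel`s. -/
def Ld (s : LTS S A) : Set (DLabel A) := (DLabel.act '' s.L) ∪ {DLabel.δ}

/-- `Utraces s`: δ-extended traces of `s` (from the initial state) that never
pass through a state refusing a subsequent input of the trace. -/
def Utraces (s : LTS S A) : Set (List (DLabel A)) :=
  { σ | (∀ ℓ ∈ σ, ℓ ∈ s.Ld) ∧ (∃ p, s.wtrans s.q0 σ p) ∧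
      ∀ σ1 a σ2, σ = σ1 ++ DLabel.act a :: σ2 → a ∈ s.I →
        ∀ p, s.wtrans s.q0 σ1 p → ∃ p', s.wtrans p [DLabel.act a] p' }

/-- `out p`: the outputs (including quiescence δ) enabled in state `p`. -/
def out (s : LTS S A) (p : S) : Set (DLabel A) :=
  { x | match x with
        | .act a => a ∈ s.U ∧ ∃ p', s.T p (some a) p'
        | .δ => s.quiescent p }

/-- `out` of a set of states. -/
def outSet (s : LTS S A) (P : Set S) : Set (DLabel A) := ⋃ p ∈ P, s.out p

/-- `inp p`: the inputs weakly enabled in state `p`. -/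
def inp (s : LTS S A) (p : S) : Set A :=
  { a | a ∈ s.I ∧ ∃ p', s.wtrans p [DLabel.act a] p' }

/-- The states reached from the initial state after trace `σ`. -/
def after (s : LTS S A) (σ : List (DLabel A)) : Set S :=
  { p' | s.wtrans s.q0 σ p' }

/-- Input-enabledness: every input is weakly enabled in every state. -/
def IOTS (s : LTS S A) : Prop :=
  ∀ q : S, ∀ a ∈ s.I, ∃ q', s.wtrans q [DLabel.act a] q'

/-- Two LTSs are composable iff their output sets are disjoint. -/
def Composable (s : LTS S A) (e : LTS E A) : Prop := Disjoint s.U e.U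

/-- Parallel composition of two LTSs: synchronisation on shared labels,
interleaving on non-shared labels and τ. -/
def par (s : LTS S A) (e : LTS E A) : LTS (S × E) A where
  I := (s.I \ e.U) ∪ (e.I \ s.U)
  U := s.U ∪ e.U
  q0 := (s.q0, e.q0)
  T := fun x ℓ y =>
    (s.T x.1 ℓ y.1 ∧ y.2 = x.2 ∧ (ℓ = none ∨ ∃ a ∈ s.L, ℓ = some a) ∧
      ∀ a ∈ e.L, ℓ ≠ some a) ∨
    (e.T x.2 ℓ y.2 ∧ y.1 = x.1 ∧ (ℓ = none ∨ ∃ a ∈ e.L, ℓ = some a) ∧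
      ∀ a ∈ s.L, ℓ ≠ some a) ∨
    (∃ a ∈ s.L ∩ e.L, ℓ = some a ∧ s.T x.1 (some a) y.1 ∧ e.T x.2 (some a) y.2)

/-- The uioco implementation relation. -/
def uioco (i : LTS E A) (s : LTS S A) : Prop :=
  ∀ σ ∈ s.Utraces, i.outSet (i.after σ) ⊆ s.outSet (s.after σ)

/-- `s.Accepts e`: along every Utrace of `s ‖ e`, every output of `e` that is an
input label of `s` is actually accepted by `s` and is an output of `e`. -/
def Accepts (s : LTS S A) (e : LTS E A) : Prop :=
  ∀ σ ∈ (s.par e).Utraces, ∀ p q, (s.par e).wtrans (s.par e).q0 σ (p, q) →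
    ∀ a, DLabel.act a ∈ e.out q → a ∈ s.I → a ∈ s.inp p ∧ a ∈ e.U

/-- Mutual acceptance. -/
def MutuallyAccepts (s : LTS S A) (e : LTS E A) : Prop := s.Accepts e ∧ e.Accepts s

/-- Isomorphism of LTSs: equal label sets and a bijection on states preserving
the initial state and all transitions (including τ and δ). -/
def Isomorphic (s : LTS S A) (s' : LTS E A) : Prop :=
  s.I = s'.I ∧ s.U = s'.U ∧ ∃ f : S ≃ E, f s.q0 = s'.q0 ∧
    (∀ p p' ℓ, s.T p ℓ p' ↔ s'.T (f p) ℓ (f p')) ∧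
    (∀ p p', s.dstep p DLabel.δ p' ↔ s'.dstep (f p) DLabel.δ (f p'))

open Classical in
/-- Projection of a trace onto a set of labels. -/
noncomputable def proj : List (DLabel A) → Set (DLabel A) → List (DLabel A)
  | [], _ => []
  | ℓ :: σ, 𝓛 => if ℓ ∈ 𝓛 then ℓ :: proj σ 𝓛 else proj σ 𝓛

end LTS


/-!
A weak transition of `s ‖ e` is a sequence of τ-moves and visible steps, and each
visible step on `ℓ` is a step of every component whose alphabet contains `ℓ`, the
other component staying put; so it projects to weak transitions of the components
and can be rebuilt from them. The one delicate label is `δ`: `s ‖ e` is quiescent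
iff both components are. If `p` could output `x` while `q` is τ-free, then `x` is
either outside the alphabet of `e` or, by composability, an input of `e`, which `q`
accepts at once by input-enabledness; either way `s ‖ e` could output `x`.
-/

namespace LTS

variable {S E A : Type}

@[simp]
lemma act_mem_Ld {s : LTS S A} {a : A} : DLabel.act a ∈ s.Ld ↔ a ∈ s.L := by
  simp [Ld]

@[simp]
lemma delta_mem_Ld {s : LTS S A} : (DLabel.δ : DLabel A) ∈ s.Ld := Or.inr rfl

lemma L_par (s : LTS S A) (e : LTS E A) : (s.par e).L = s.L ∪ e.L := by
  ext a
  simp only [L, par, Set.mem_union, Set.mem_sdiff]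
  tauto

open Classical in
lemma proj_cons_of_mem {ℓ : DLabel A} {σ : List (DLabel A)} {𝓛 : Set (DLabel A)}
    (h : ℓ ∈ 𝓛) : proj (ℓ :: σ) 𝓛 = ℓ :: proj σ 𝓛 := by
  simp [proj, h]

open Classical in
lemma proj_cons_of_not_mem {ℓ : DLabel A} {σ : List (DLabel A)} {𝓛 : Set (DLabel A)}
    (h : ℓ ∉ 𝓛) : proj (ℓ :: σ) 𝓛 = proj σ 𝓛 := by
  simp [proj, h]

open Classical in
def dstepOrStay (s : LTS S A) (ℓ : DLabel A) (p p' : S) : Prop :=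
  if ℓ ∈ s.Ld then s.dstep p ℓ p' else p = p'

section Component

variable {s : LTS S A} {ℓ : DLabel A} {p p' : S}

lemma dstepOrStay_of_mem (h : ℓ ∈ s.Ld) : s.dstepOrStay ℓ p p' ↔ s.dstep p ℓ p' := by
  simp [dstepOrStay, h]

lemma dstepOrStay_of_not_mem (h : ℓ ∉ s.Ld) : s.dstepOrStay ℓ p p' ↔ p = p' := by
  simp [dstepOrStay, h]

lemma wtrans_of_eps_of_wtrans {p₁ : S} {σ : List (DLabel A)} (h : s.eps p p₁)
    (hw : s.wtrans p₁ σ p') : s.wtrans p σ p' := by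
  cases σ with
  | nil => exact h.trans hw
  | cons ℓ σ =>
      obtain ⟨p₂, p₃, h₁, h₂, h₃⟩ := hw
      exact ⟨p₂, p₃, h.trans h₁, h₂, h₃⟩

lemma wtrans_proj_cons {σ : List (DLabel A)} :
    s.wtrans p (proj (ℓ :: σ) s.Ld) p' ↔
      ∃ p₁ p₂, s.eps p p₁ ∧ s.dstepOrStay ℓ p₁ p₂ ∧ s.wtrans p₂ (proj σ s.Ld) p' := by
  by_cases hℓ : ℓ ∈ s.Ld
  · simp only [proj_cons_of_mem hℓ, dstepOrStay_of_mem hℓ, wtrans]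
  · simp only [proj_cons_of_not_mem hℓ, dstepOrStay_of_not_mem hℓ]
    constructor
    · exact fun h => ⟨p, p, .refl, rfl, h⟩
    · rintro ⟨p₁, _, h₁, rfl, h₂⟩
      exact wtrans_of_eps_of_wtrans h₁ h₂

lemma IOTS.exists_T_of_forall_not_T_none (hs : s.IOTS) (hp : ∀ p', ¬ s.T p none p')
    {a : A} (ha : a ∈ s.I) : ∃ p', s.T p (some a) p' := by
  obtain ⟨-, p₁, p₂, hp₁, hT, -⟩ := hs p a ha
  obtain rfl : p = p₁ := by
    rcases hp₁.cases_head with h | ⟨p₀, h, -⟩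
    · exact h
    · exact absurd h (hp p₀)
  exact ⟨p₂, hT⟩

lemma IOTS.exists_dstepOrStay_act (hs : s.IOTS) (hp : ∀ p', ¬ s.T p none p')
    {a : A} (ha : a ∉ s.U) : ∃ p', s.dstepOrStay (.act a) p p' := by
  by_cases haL : a ∈ s.L
  · obtain ⟨p', hT⟩ := hs.exists_T_of_forall_not_T_none hp (haL.resolve_right ha)
    exact ⟨p', (dstepOrStay_of_mem (act_mem_Ld.2 haL)).2 hT⟩
  · exact ⟨p, (dstepOrStay_of_not_mem (mt act_mem_Ld.1 haL)).2 rfl⟩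

end Component

section Par

variable {s : LTS S A} {e : LTS E A} {p p' : S} {q q' : E}

lemma T_par_none_iff :
    (s.par e).T (p, q) none (p', q') ↔
      (s.T p none p' ∧ q' = q) ∨ (e.T q none q' ∧ p' = p) := by
  simp [par]

lemma T_par_some_iff {a : A} (ha : a ∈ s.L ∪ e.L) :
    (s.par e).T (p, q) (some a) (p', q') ↔
      s.dstepOrStay (.act a) p p' ∧ e.dstepOrStay (.act a) q q' := by
  by_cases hs : a ∈ s.L <;> by_cases he : a ∈ e.L <;>
    grind [par, dstepOrStay, dstep, act_mem_Ld]

lemma eps_par_iff : (s.par e).eps (p, q) (p', q') ↔ s.eps p p' ∧ e.eps q q' := by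
  constructor
  · suffices ∀ x y, (s.par e).eps x y → s.eps x.1 y.1 ∧ e.eps x.2 y.2 from this _ _
    intro x y h
    induction h with
    | refl => exact ⟨.refl, .refl⟩
    | tail _ hT ih =>
        rcases T_par_none_iff.1 hT with ⟨h, hq⟩ | ⟨h, hp⟩
        · exact ⟨ih.1.tail h, hq ▸ ih.2⟩
        · exact ⟨hp ▸ ih.1, ih.2.tail h⟩
  · rintro ⟨hp, hq⟩
    exact (hp.lift (·, q) fun _ _ h => T_par_none_iff.2 (.inl ⟨h, rfl⟩)).trans
      (hq.lift (p', ·) fun _ _ h => T_par_none_iff.2 (.inr ⟨h, rfl⟩))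

variable (hc : Composable s e) (hs : s.IOTS) (he : e.IOTS)
include hc hs he

lemma quiescent_par_iff : (s.par e).quiescent (p, q) ↔ s.quiescent p ∧ e.quiescent q := by
  constructor
  · rintro ⟨hout, htau⟩
    have hp : ∀ p', ¬ s.T p none p' := fun p' h =>
      htau (p', q) (T_par_none_iff.2 (.inl ⟨h, rfl⟩))
    have hq : ∀ q', ¬ e.T q none q' := fun q' h =>
      htau (p, q') (T_par_none_iff.2 (.inr ⟨h, rfl⟩))
    refine ⟨⟨fun x hx p' hT => ?_, hp⟩, ⟨fun x hx q' hT => ?_, hq⟩⟩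
    · obtain ⟨q', hq'⟩ := he.exists_dstepOrStay_act hq (Set.disjoint_left.1 hc hx)
      exact hout x (.inl hx) (p', q') <| (T_par_some_iff (.inl (.inr hx))).2
        ⟨(dstepOrStay_of_mem (act_mem_Ld.2 (.inr hx))).2 hT, hq'⟩
    · obtain ⟨p', hp'⟩ := hs.exists_dstepOrStay_act hp (Set.disjoint_right.1 hc hx)
      exact hout x (.inr hx) (p', q') <| (T_par_some_iff (.inr (.inr hx))).2
        ⟨hp', (dstepOrStay_of_mem (act_mem_Ld.2 (.inr hx))).2 hT⟩
  · rintro ⟨⟨hpo, hpt⟩, ⟨hqo, hqt⟩⟩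
    refine ⟨?_, ?_⟩
    · rintro x hx ⟨p', q'⟩ hT
      obtain ⟨hp', hq'⟩ := (T_par_some_iff (hx.imp .inr .inr)).1 hT
      rcases hx with hx | hx
      · exact hpo x hx p' ((dstepOrStay_of_mem (act_mem_Ld.2 (.inr hx))).1 hp')
      · exact hqo x hx q' ((dstepOrStay_of_mem (act_mem_Ld.2 (.inr hx))).1 hq')
    · rintro ⟨p', q'⟩ hT
      rcases T_par_none_iff.1 hT with ⟨h, -⟩ | ⟨h, -⟩
      exacts [hpt p' h, hqt q' h]

lemma dstep_par_iff {ℓ : DLabel A} (hℓ : ℓ ∈ (s.par e).Ld) :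
    (s.par e).dstep (p, q) ℓ (p', q') ↔ s.dstepOrStay ℓ p p' ∧ e.dstepOrStay ℓ q q' := by
  cases ℓ with
  | act a =>
      rw [act_mem_Ld, L_par] at hℓ
      exact T_par_some_iff hℓ
  | δ =>
      simp only [dstep, dstepOrStay_of_mem delta_mem_Ld, Prod.mk.injEq,
        quiescent_par_iff hc hs he]
      tauto

theorem wtrans_par_iff {σ : List (DLabel A)} (hσ : ∀ ℓ ∈ σ, ℓ ∈ (s.par e).Ld) :
    (s.par e).wtrans (p, q) σ (p', q') ↔
      s.wtrans p (proj σ s.Ld) p' ∧ e.wtrans q (proj σ e.Ld) q' := by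
  induction σ generalizing p q with
  | nil => exact eps_par_iff
  | cons ℓ σ ih =>
      have hℓ := hσ ℓ List.mem_cons_self
      have hσ' := fun x hx => hσ x (List.mem_cons_of_mem ℓ hx)
      simp only [wtrans_proj_cons]
      constructor
      · rintro ⟨⟨p₁, q₁⟩, ⟨p₂, q₂⟩, h₁, h₂, h₃⟩
        obtain ⟨hp₁, hq₁⟩ := eps_par_iff.1 h₁
        obtain ⟨hp₂, hq₂⟩ := (dstep_par_iff hc hs he hℓ).1 h₂
        obtain ⟨hp₃, hq₃⟩ := (ih hσ').1 h₃
        exact ⟨⟨p₁, p₂, hp₁, hp₂, hp₃⟩, ⟨q₁, q₂, hq₁, hq₂, hq₃⟩⟩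
      · rintro ⟨⟨p₁, p₂, hp₁, hp₂, hp₃⟩, ⟨q₁, q₂, hq₁, hq₂, hq₃⟩⟩
        exact ⟨(p₁, q₁), (p₂, q₂), eps_par_iff.2 ⟨hp₁, hq₁⟩,
          (dstep_par_iff hc hs he hℓ).2 ⟨hp₂, hq₂⟩, (ih hσ').2 ⟨hp₃, hq₃⟩⟩

end Par

end LTS

theorem wtrans_par_iff_of_IOTS_general {S E A : Type} (iS : LTS S A) (iE : LTS E A)
    (hc : LTS.Composable iS iE)
    (his : iS.IOTS) (hie : iE.IOTS)
    (iS' : S) (iE' : E) (σ : List (DLabel A))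
    (hσ : ∀ x ∈ σ, x ∈ (iS.par iE).Ld) :
    (iS.par iE).wtrans (iS.par iE).q0 σ (iS', iE') ↔
      iS.wtrans iS.q0 (LTS.proj σ iS.Ld) iS' ∧
        iE.wtrans iE.q0 (LTS.proj σ iE.Ld) iE' :=
  LTS.wtrans_par_iff hc his hie hσ

/-- for composable input-enabled systems, a weak transition of the
composition corresponds exactly to weak transitions of the components along the
projected traces. -/
theorem wtrans_par_iff_of_IOTS {S E A : Type} (iS : LTS S A) (iE : LTS E A)
    (hs : iS.WF) (he : iE.WF) (hc : LTS.Composable iS iE)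
    (his : iS.IOTS) (hie : iE.IOTS)
    (iS' : S) (iE' : E) (σ : List (DLabel A))
    (hσ : ∀ x ∈ σ, x ∈ (iS.par iE).Ld) :
    (iS.par iE).wtrans (iS.par iE).q0 σ (iS', iE') ↔
      iS.wtrans iS.q0 (LTS.proj σ iS.Ld) iS' ∧
        iE.wtrans iE.q0 (LTS.proj σ iE.Ld) iE' :=
  wtrans_par_iff_of_IOTS_general iS iE hc his hie iS' iE' σ hσ
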